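/- arXiv:2410.07984 — 3 statements merged into one kernel-verified Lean document; each statement's English description precedes it below -/
import Mathlib

section
/- Let N: X → Y be a channel that arises as a simulation procedure with communication cost no more than c bits. Then there exists a probability distribution Q_Y on Y such that for every probability distribution P_X on X and all (x,y) ∈ X×Y, one has P_X(x)·N(y|x) ≤ 2^c · P_X(x)·Q_Y(y). -/
open scoped ENNReal NNReal BigOperators Classical
open Filter

noncomputable section

namespace RST

/-- Base-2 logarithm `ℝ≥0∞ → EReal`, with `log 0 = ⊥` and `log ⊤ = ⊤`. -/
def elog2 (s : ℝ≥0∞) : EReal :=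
  if s = 0 then ⊥ else if s = ⊤ then ⊤ else ((Real.logb 2 s.toReal : ℝ) : EReal)

/-- Base-2 logarithm `EReal → EReal` (for nonnegative arguments). -/
def eLog2 (x : EReal) : EReal :=
  if x = ⊤ then ⊤ else if x ≤ 0 then ⊥ else ((Real.logb 2 x.toReal : ℝ) : EReal)

/-- Base-2 exponential `EReal → ℝ≥0∞`. -/
def epow2 (x : EReal) : ℝ≥0∞ :=
  if x = ⊤ then ⊤ else if x = ⊥ then 0 else ENNReal.ofReal ((2 : ℝ) ^ x.toReal)

variable {X Y : Type*}

/-- A probability distribution on a finite alphabet, as an `ℝ≥0∞`-valued function. -/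
def IsDist [Fintype X] (P : X → ℝ≥0∞) : Prop := ∑ x, P x = 1

/-- A discrete memoryless channel: every row is a probability distribution. -/
def IsChannel [Fintype X] [Fintype Y] (W : X → Y → ℝ≥0∞) : Prop := ∀ x, ∑ y, W x y = 1

/-- Order-`α` Rényi divergence (base 2), with the order `α ∈ [0,∞]` encoded as `ℝ≥0∞`.
The conventions `0/0 = 0` and `a/0 = ∞` (for `a > 0`, `α > 1`) are built into `ℝ≥0∞`
arithmetic.  The second argument is allowed to be an arbitrary nonnegative vector. -/
def renyiD [Fintype X] (α : ℝ≥0∞) (P Q : X → ℝ≥0∞) : EReal :=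
  if α = 0 then - elog2 (∑ x ∈ Finset.univ.filter fun x => P x ≠ 0, Q x)
  else if α = 1 then ∑ x, ((P x).toReal : EReal) * elog2 (P x / Q x)
  else if α = ⊤ then elog2 (⨆ x, P x / Q x)
  else (((α.toReal - 1)⁻¹ : ℝ) : EReal) *
    elog2 (∑ x, P x ^ α.toReal * Q x ^ (1 - α.toReal))

/-- The `X`-marginal of a joint distribution on `X × Y`. -/
def margX [Fintype X] [Fintype Y] (P : X × Y → ℝ≥0∞) : X → ℝ≥0∞ := fun x => ∑ y, P (x, y)

/-- Order-`α` Rényi mutual information `I_α(X:Y)_P = min_{Q_Y} D_α(P‖P_X × Q_Y)`. -/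
def renyiMI [Fintype X] [Fintype Y] (α : ℝ≥0∞) (P : X × Y → ℝ≥0∞) : EReal :=
  ⨅ Q : {Q : Y → ℝ≥0∞ // IsDist Q}, renyiD α P fun p => margX P p.1 * Q.1 p.2

/-- The joint input-output distribution `P_X · W`. -/
def joint [Fintype X] [Fintype Y] (PX : X → ℝ≥0∞) (W : X → Y → ℝ≥0∞) : X × Y → ℝ≥0∞ :=
  fun p => PX p.1 * W p.1 p.2

/-- Order-`α` Rényi capacity `I_α(W) = max_{P_X} I_α(X:Y)_{P_X · W}`. -/
def renyiCap [Fintype X] [Fintype Y] (α : ℝ≥0∞) (W : X → Y → ℝ≥0∞) : EReal :=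
  ⨆ P : {P : X → ℝ≥0∞ // IsDist P}, renyiMI α (joint P.1 W)

/-- `N` is a simulation of a channel `X → Y` with communication cost at most `c` bits:
shared randomness `K = Fin m` with distribution `PK`, a message set `{1,…,M}` with
`log₂ M ≤ c`, an encoder `E` and a decoder `D`. -/
def IsSimulation [Fintype X] [Fintype Y] (c : ℝ) (N : X → Y → ℝ≥0∞) : Prop :=
  ∃ (m M : ℕ) (PK : Fin m → ℝ≥0∞) (E : X → Fin m → Fin M → ℝ≥0∞)
    (D : Fin M → Fin m → Y → ℝ≥0∞),
    0 < M ∧ Real.logb 2 M ≤ c ∧ (∑ k, PK k = 1) ∧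
    (∀ x k, ∑ j, E x k j = 1) ∧ (∀ j k, ∑ y, D j k y = 1) ∧
    ∀ x y, N x y = ∑ k, ∑ j, PK k * E x k j * D j k y

/-- `D_α(W, N) := max_x D_α(W(·|x) ‖ N(·|x))`. -/
def chD [Fintype X] [Fintype Y] (α : ℝ≥0∞) (W N : X → Y → ℝ≥0∞) : EReal :=
  ⨆ x, renyiD α (W x) (N x)

/-- `𝖣_α(W, c) := min_{N ∈ A(W,c)} D_α(W, N)`. -/
def simD [Fintype X] [Fintype Y] (α : ℝ≥0∞) (W : X → Y → ℝ≥0∞) (c : ℝ) : EReal :=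
  ⨅ N : {N : X → Y → ℝ≥0∞ // IsSimulation c N}, chD α W N.1

/-- The `n`-fold memoryless extension `W^{×n}` of a channel `W`. -/
def prodCh [Fintype X] [Fintype Y] (n : ℕ) (W : X → Y → ℝ≥0∞) :
    (Fin n → X) → (Fin n → Y) → ℝ≥0∞ :=
  fun xs ys => ∏ i, W (xs i) (ys i)

/-- A sequence of communication costs with rate at most `r`. -/
def RateOK (r : ℝ) (c : ℕ → ℝ) : Prop :=
  (∀ n, 0 ≤ c n) ∧ Filter.limsup (fun n : ℕ => ((c n / n : ℝ) : EReal)) Filter.atTop ≤ (r : EReal)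

/-- Reliability function `E_rf^{(α)}(W, r)`. -/
def Erf [Fintype X] [Fintype Y] (α : ℝ≥0∞) (W : X → Y → ℝ≥0∞) (r : ℝ) : EReal :=
  ⨆ c : {c : ℕ → ℝ // RateOK r c},
    Filter.liminf
      (fun n : ℕ => (((-1 : ℝ) / n : ℝ) : EReal) * eLog2 (simD α (prodCh n W) (c.1 n)))
      Filter.atTop

/-- Strong converse exponent `E_sc^{(α)}(W, r)`. -/
def Esc [Fintype X] [Fintype Y] (α : ℝ≥0∞) (W : X → Y → ℝ≥0∞) (r : ℝ) : EReal :=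
  ⨅ c : {c : ℕ → ℝ // RateOK r c},
    Filter.limsup
      (fun n : ℕ => (((1 : ℝ) / n : ℝ) : EReal) * simD α (prodCh n W) (c.1 n))
      Filter.atTop

/-- The `α`-Rényi simulation rate `R_RST^{(α)}(W)`. -/
def Rrst [Fintype X] [Fintype Y] (α : ℝ≥0∞) (W : X → Y → ℝ≥0∞) : EReal :=
  ⨅ c : {c : ℕ → ℝ // (∀ n, 0 ≤ c n) ∧
      Filter.limsup (fun n : ℕ => simD α (prodCh n W) (c n)) Filter.atTop = 0},
    Filter.limsup (fun n : ℕ => ((c.1 n / n : ℝ) : EReal)) Filter.atTop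

/-- n-fold product of a joint distribution on `X × Y`, as a distribution on pairs of
sequences. -/
def prodJoint [Fintype X] [Fintype Y] (n : ℕ) (P : X × Y → ℝ≥0∞) :
    (Fin n → X) × (Fin n → Y) → ℝ≥0∞ :=
  fun p => ∏ i, P (p.1 i, p.2 i)

/-- n-fold product distribution. -/
def prodDist [Fintype X] (n : ℕ) (P : X → ℝ≥0∞) : (Fin n → X) → ℝ≥0∞ :=
  fun xs => ∏ i, P (xs i)

/-- The type (empirical count vector) of a sequence. -/
def seqType [Fintype Y] [DecidableEq Y] {n : ℕ} (ys : Fin n → Y) : Y → ℕ :=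
  fun y => (Finset.univ.filter fun i => ys i = y).card

/-- The cardinality of the type class of a sequence. -/
def typeClassCard [Fintype Y] [DecidableEq Y] {n : ℕ} (ys : Fin n → Y) : ℕ :=
  (Finset.univ.filter fun zs : Fin n → Y => seqType zs = seqType ys).card

/-- The number of types of sequences in `Y^n`. -/
def numTypes (Y : Type*) [Fintype Y] [DecidableEq Y] (n : ℕ) : ℕ :=
  (Finset.univ.image fun ys : Fin n → Y => seqType ys).card

/-- `Φ_{Y^n}`: the uniform mixture over type classes of `Y^n`. -/
def PhiY (Y : Type*) [Fintype Y] [DecidableEq Y] (n : ℕ) : (Fin n → Y) → ℝ≥0∞ :=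
  fun ys => ((numTypes Y n : ℝ≥0∞) * (typeClassCard ys : ℝ≥0∞))⁻¹

end RST

/-! Replacing the message `j = E(x,k)` by a uniformly random one makes the output independent
of `x`; call its law `Q`. Since `E(j|x,k) ≤ 1 = M · (1/M)`, every term of `N(y|x)` is at most
`M` times the corresponding term of `Q(y)`, so `N(y|x) ≤ M · Q(y) ≤ 2^c · Q(y)`. -/

namespace RST

section UniformMessage

variable {Y K J : Type*} [Fintype K] [Fintype J]

def uniformMessageOutput (PK : K → ℝ≥0∞) (D : J → K → Y → ℝ≥0∞) : Y → ℝ≥0∞ :=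
  fun y => (Fintype.card J : ℝ≥0∞)⁻¹ * ∑ k, ∑ j, PK k * D j k y

theorem isDist_uniformMessageOutput [Fintype Y] [Nonempty J] {PK : K → ℝ≥0∞}
    {D : J → K → Y → ℝ≥0∞} (hPK : ∑ k, PK k = 1) (hD : ∀ j k, ∑ y, D j k y = 1) :
    IsDist (uniformMessageOutput PK D) := by
  have hmass : ∑ y, ∑ k, ∑ j, PK k * D j k y = Fintype.card J := by
    calc ∑ y, ∑ k, ∑ j, PK k * D j k y = ∑ k, ∑ j, PK k * ∑ y, D j k y := by
          rw [Finset.sum_comm]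
          refine Finset.sum_congr rfl fun k _ => ?_
          rw [Finset.sum_comm]
          simp only [Finset.mul_sum]
      _ = Fintype.card J := by
          simp only [hD, mul_one, Finset.sum_const, Finset.card_univ, nsmul_eq_mul]
          rw [← Finset.mul_sum, hPK, mul_one]
  unfold IsDist uniformMessageOutput
  rw [← Finset.mul_sum, hmass]
  exact ENNReal.inv_mul_cancel (by simp) (ENNReal.natCast_ne_top _)

theorem sum_encoder_decoder_le_card_mul_uniformMessageOutput [Nonempty J] (PK : K → ℝ≥0∞)
    {E : K → J → ℝ≥0∞} (D : J → K → Y → ℝ≥0∞) (hE : ∀ k, ∑ j, E k j = 1) (y : Y) :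
    ∑ k, ∑ j, PK k * E k j * D j k y ≤
      Fintype.card J * uniformMessageOutput PK D y := by
  have hE_le_one : ∀ k j, E k j ≤ 1 := fun k j =>
    hE k ▸ Finset.single_le_sum (fun i _ => zero_le) (Finset.mem_univ j)
  calc ∑ k, ∑ j, PK k * E k j * D j k y ≤ ∑ k, ∑ j, PK k * D j k y := by
        gcongr with k _ j _
        exact mul_le_of_le_one_right' (hE_le_one k j)
    _ = Fintype.card J * uniformMessageOutput PK D y := by
        rw [uniformMessageOutput, ← mul_assoc, ENNReal.mul_inv_cancel (by simp)
          (ENNReal.natCast_ne_top _), one_mul]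

end UniformMessage

theorem natCast_le_ofReal_two_rpow {M : ℕ} {c : ℝ} (hM : 0 < M) (hc : Real.logb 2 M ≤ c) :
    (M : ℝ≥0∞) ≤ ENNReal.ofReal ((2 : ℝ) ^ c) := by
  rw [← ENNReal.ofReal_natCast]
  exact ENNReal.ofReal_le_ofReal
    ((Real.logb_le_iff_le_rpow one_lt_two (Nat.cast_pos.mpr hM)).mp hc)

/-- **Lemma 8 (u-bound).** If `N : X → Y` is a channel arising from a simulation
procedure with communication cost at most `c` bits, then there is a probability
distribution `Q_Y` such that for every input distribution `P_X` and all `(x,y)`,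
`P_X(x) · N(y|x) ≤ 2^c · P_X(x) · Q_Y(y)`. -/
theorem simulation_u_bound
    {X Y : Type*} [Fintype X] [Fintype Y]
    (c : ℝ) (N : X → Y → ℝ≥0∞) (h : IsSimulation c N) :
    ∃ Q : Y → ℝ≥0∞, IsDist Q ∧
      ∀ P : X → ℝ≥0∞, IsDist P → ∀ x y,
        P x * N x y ≤ ENNReal.ofReal ((2 : ℝ) ^ c) * (P x * Q y) := by
  obtain ⟨m, M, PK, E, D, hM, hc, hPK, hE, hD, hN⟩ := h
  have : Nonempty (Fin M) := Fin.pos_iff_nonempty.mp hM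
  refine ⟨uniformMessageOutput PK D, isDist_uniformMessageOutput hPK hD, fun P _ x y => ?_⟩
  have hNQ : N x y ≤ M * uniformMessageOutput PK D y := by
    simpa only [hN, Fintype.card_fin] using
      sum_encoder_decoder_le_card_mul_uniformMessageOutput PK D (hE x) y
  calc P x * N x y ≤ M * (P x * uniformMessageOutput PK D y) := by
        rw [mul_left_comm]; gcongr
    _ ≤ ENNReal.ofReal ((2 : ℝ) ^ c) * (P x * uniformMessageOutput PK D y) := by
        gcongr; exact natCast_le_ofReal_two_rpow hM hc

end RST
end
end

section
/- For any r ≥ 0 and any discrete memoryless channel W: X → Y on finite alphabets, lim_{α→0+} max_{α≤β≤1} [α(1−β)/(β(1−α))](I_β(W) − r) = max{I_0(W) − r, 0}. -/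
open scoped ENNReal NNReal BigOperators Classical
open Filter

noncomputable section

/-! For an input distribution `P` let `m(P) = max_y P{x : W(y|x) ≠ 0}`; then
`I_0(P·W) = -log₂ m(P)`, the infimum over `Q_Y` being attained at a point mass.
For `0 < β < 1`, `D_β(P·W ‖ P × Q_Y) = (β-1)⁻¹ log₂ ∑_y Q_y^{1-β} ∑_x P(x) W(y|x)^β`.
Testing the infimum against the point mass at the maximising output, and bounding it below
with Hölder's `∑_y Q_y^{1-β} ≤ |Y|^β`, gives
`-β log₂|Y| ≤ (1-β) I_β(P·W) - I_0(P·W) ≤ -β log₂ w`, uniformly in `P`, where `w` is the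
smallest nonzero transition probability. Hence `|(1-β) I_β(W) - I_0(W)| ≤ β L` for a constant `L`.
With this linear control the weighted term at `β = α` is about `I_0(W) - r`, the one at `β = 1`
vanishes, and every term is at most `(|I_0(W) - r|⁺ + α (L + |r|)) / (1 - α)`; both bounds tend
to `|I_0(W) - r|⁺` as `α → 0+`. -/

open Set Topology

namespace RST

lemma elog2_of_ne_zero_of_ne_top {s : ℝ≥0∞} (h0 : s ≠ 0) (ht : s ≠ ⊤) :
    elog2 s = (Real.logb 2 s.toReal : EReal) := by
  simp [elog2, h0, ht]

lemma elog2_mono : Monotone elog2 := by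
  intro s t hst
  rcases eq_or_ne s 0 with rfl | hs
  · simp [elog2]
  rcases eq_or_ne t ⊤ with rfl | ht
  · simp [elog2]
  have ht0 : t ≠ 0 := (pos_iff_ne_zero.2 hs).trans_le hst |>.ne'
  have hs' : s ≠ ⊤ := ne_top_of_le_ne_top ht hst
  rw [elog2_of_ne_zero_of_ne_top hs hs', elog2_of_ne_zero_of_ne_top ht0 ht, EReal.coe_le_coe_iff]
  exact Real.logb_le_logb_of_le one_lt_two (ENNReal.toReal_pos hs hs') (ENNReal.toReal_mono ht hst)

lemma antitone_coe_mul_elog2 {c : ℝ} (hc : c ≤ 0) : Antitone fun s => (c : EReal) * elog2 s := by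
  intro s t hst
  simp only [mul_comm (c : EReal)]
  exact EReal.mul_le_mul_of_nonpos_right (elog2_mono hst) (EReal.coe_nonpos.2 hc)

lemma coe_mul_elog2_rpow_mul {c β : ℝ} {u m : ℝ≥0∞} (hu0 : u ≠ 0) (hut : u ≠ ⊤) (hm0 : m ≠ 0)
    (hmt : m ≠ ⊤) :
    (c : EReal) * elog2 (u ^ β * m)
      = ((c * (β * Real.logb 2 u.toReal + Real.logb 2 m.toReal) : ℝ) : EReal) := by
  have hpos : 0 < u.toReal := ENNReal.toReal_pos hu0 hut
  rw [elog2_of_ne_zero_of_ne_top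
      (mul_ne_zero (ENNReal.rpow_pos (pos_iff_ne_zero.2 hu0) hut).ne' hm0)
      (ENNReal.mul_ne_top (ENNReal.rpow_ne_top_of_ne_zero hu0 hut) hmt),
    ← EReal.coe_mul, ENNReal.toReal_mul, ← ENNReal.toReal_rpow,
    Real.logb_mul (Real.rpow_pos_of_pos hpos β).ne' (ENNReal.toReal_pos hm0 hmt).ne',
    Real.logb_rpow_eq_mul_logb_of_pos hpos]

lemma exists_coe_eq_of_le_of_le {x : EReal} {a b : ℝ} (ha : (a : EReal) ≤ x) (hb : x ≤ b) :
    ∃ t : ℝ, x = t :=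
  ⟨x.toReal, (EReal.coe_toReal (hb.trans_lt (EReal.coe_lt_top b)).ne
    ((EReal.bot_lt_coe a).trans_le ha).ne').symm⟩

lemma exists_iSup_eq_coe_of_le_of_le {ι : Type*} [Nonempty ι] {F : ι → EReal} {v : ι → ℝ}
    {c k a b : ℝ} (hc : ⨆ i, (v i : EReal) = c) (hk : 0 < k)
    (hlow : ∀ i, (((v i - a) / k : ℝ) : EReal) ≤ F i)
    (hup : ∀ i, F i ≤ (((v i + b) / k : ℝ) : EReal)) :
    ∃ x : ℝ, ⨆ i, F i = x ∧ c - a ≤ k * x ∧ k * x ≤ c + b := by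
  have hv : ∀ i, v i ≤ c := fun i =>
    EReal.coe_le_coe_iff.1 (hc ▸ le_iSup (fun i => (v i : EReal)) i)
  have hsup : ⨆ i, F i ≤ (((c + b) / k : ℝ) : EReal) :=
    iSup_le fun i => (hup i).trans (EReal.coe_le_coe_iff.2 (by gcongr; exact hv i))
  have hinf : ∀ i, (((v i - a) / k : ℝ) : EReal) ≤ ⨆ i, F i := fun i =>
    (hlow i).trans (le_iSup F i)
  obtain ⟨x, hx⟩ := exists_coe_eq_of_le_of_le (hinf (Classical.arbitrary ι)) hsup
  rw [hx] at hsup hinf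
  refine ⟨x, hx, ?_, ?_⟩
  · have hvx : ⨆ i, (v i : EReal) ≤ ((k * x + a : ℝ) : EReal) := iSup_le fun i => by
      have := EReal.coe_le_coe_iff.1 (hinf i)
      rw [div_le_iff₀ hk] at this
      exact EReal.coe_le_coe_iff.2 (by linarith)
    rw [hc, EReal.coe_le_coe_iff] at hvx
    linarith
  · rwa [EReal.coe_le_coe_iff, le_div_iff₀ hk, mul_comm] at hsup

lemma exists_pos_le_of_ne_zero {ι : Type*} [Finite ι] (f : ι → ℝ≥0∞) :
    ∃ w : ℝ≥0, 0 < w ∧ ∀ i, f i ≠ 0 → (w : ℝ≥0∞) ≤ f i := by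
  have hcoe : Tendsto (fun w : ℝ≥0 => (w : ℝ≥0∞)) (𝓝[>] 0) (𝓝 0) :=
    (ENNReal.continuous_coe.tendsto' 0 0 rfl).mono_left nhdsWithin_le_nhds
  have h : ∀ i, ∀ᶠ w : ℝ≥0 in 𝓝[>] 0, f i ≠ 0 → (w : ℝ≥0∞) ≤ f i := fun i => by
    rcases eq_or_ne (f i) 0 with hi | hi
    · simp [hi]
    · filter_upwards [hcoe.eventually (gt_mem_nhds (pos_iff_ne_zero.2 hi))] with w hw _
      exact hw.le
  obtain ⟨w, hw, hw0⟩ := ((Filter.eventually_all.2 h).and self_mem_nhdsWithin).exists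
  exact ⟨w, hw0, hw⟩

lemma sum_rpow_one_sub_le_card_rpow {ι : Type*} (s : Finset ι) {Q : ι → ℝ≥0∞}
    (hQ : ∑ i ∈ s, Q i = 1) {β : ℝ} (hβ0 : 0 < β) (hβ1 : β < 1) :
    ∑ i ∈ s, Q i ^ (1 - β) ≤ (s.card : ℝ≥0∞) ^ β := by
  have h := ENNReal.inner_le_Lp_mul_Lq s (fun i => Q i ^ (1 - β)) 1
    (Real.HolderConjugate.one_sub_inv_inv hβ0 hβ1)
  have hQ' : ∀ i, (Q i ^ (1 - β)) ^ (1 - β)⁻¹ = Q i := fun i => by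
    rw [← ENNReal.rpow_mul, mul_inv_cancel₀ (by linarith), ENNReal.rpow_one]
  simpa [hQ', hQ] using h

section

variable {X Y : Type*} [Fintype X] {W : X → Y → ℝ≥0∞}

def supportMass (W : X → Y → ℝ≥0∞) (P : X → ℝ≥0∞) (y : Y) : ℝ≥0∞ :=
  ∑ x ∈ Finset.univ.filter (fun x => W x y ≠ 0), P x

def outputMoment (W : X → Y → ℝ≥0∞) (β : ℝ) (P : X → ℝ≥0∞) (y : Y) : ℝ≥0∞ :=
  ∑ x, P x * W x y ^ β

lemma rpow_mul_supportMass_le_outputMoment {w : ℝ≥0∞} (hw : ∀ x y, W x y ≠ 0 → w ≤ W x y)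
    {β : ℝ} (hβ : 0 < β) (P : X → ℝ≥0∞) (y : Y) :
    w ^ β * supportMass W P y ≤ outputMoment W β P y := by
  rw [outputMoment, supportMass, Finset.sum_filter, Finset.mul_sum]
  refine Finset.sum_le_sum fun x _ => ?_
  split_ifs with h
  · rw [mul_comm]
    exact mul_le_mul_right (ENNReal.rpow_le_rpow (hw x y h) hβ.le) _
  · simp

variable [Fintype Y]

def maxSupportMass (W : X → Y → ℝ≥0∞) (P : X → ℝ≥0∞) : ℝ≥0∞ :=
  Finset.univ.sup (supportMass W P)

lemma IsChannel.le_one (hW : IsChannel W) (x : X) (y : Y) : W x y ≤ 1 :=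
  hW x ▸ Finset.single_le_sum (fun _ _ => zero_le) (Finset.mem_univ y)

lemma IsChannel.exists_ne_zero (hW : IsChannel W) (x : X) : ∃ y, W x y ≠ 0 := by
  by_contra! h
  simpa [h] using hW x

lemma margX_joint (hW : IsChannel W) (P : X → ℝ≥0∞) : margX (joint P W) = P := by
  funext x
  simp [margX, joint, ← Finset.mul_sum, hW x]

lemma supportMass_le_maxSupportMass (P : X → ℝ≥0∞) (y : Y) :
    supportMass W P y ≤ maxSupportMass W P :=
  Finset.le_sup (Finset.mem_univ y)

lemma maxSupportMass_le_one {P : X → ℝ≥0∞} (hP : IsDist P) : maxSupportMass W P ≤ 1 :=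
  Finset.sup_le fun _ _ => hP ▸ Finset.sum_le_sum_of_subset (Finset.filter_subset _ _)

lemma maxSupportMass_ne_top {P : X → ℝ≥0∞} (hP : IsDist P) : maxSupportMass W P ≠ ⊤ :=
  ne_top_of_le_ne_top ENNReal.one_ne_top (maxSupportMass_le_one hP)

lemma one_le_card_mul_maxSupportMass (hW : IsChannel W) {P : X → ℝ≥0∞} (hP : IsDist P) :
    1 ≤ (Fintype.card Y : ℝ≥0∞) * maxSupportMass W P := by
  have hcover : ∀ x, P x ≤ ∑ y, if W x y ≠ 0 then P x else 0 := fun x => by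
    obtain ⟨y, hy⟩ := IsChannel.exists_ne_zero hW x
    simpa [hy] using Finset.single_le_sum (f := fun y => if W x y ≠ 0 then P x else 0)
      (fun _ _ => zero_le) (Finset.mem_univ y)
  calc (1 : ℝ≥0∞) = ∑ x, P x := hP.symm
    _ ≤ ∑ x, ∑ y, if W x y ≠ 0 then P x else 0 := Finset.sum_le_sum fun x _ => hcover x
    _ = ∑ y, supportMass W P y := by
      rw [Finset.sum_comm]
      simp only [supportMass, Finset.sum_filter]
    _ ≤ ∑ _y : Y, maxSupportMass W P :=
      Finset.sum_le_sum fun y _ => supportMass_le_maxSupportMass P y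
    _ = (Fintype.card Y : ℝ≥0∞) * maxSupportMass W P := by simp

lemma maxSupportMass_ne_zero (hW : IsChannel W) {P : X → ℝ≥0∞} (hP : IsDist P) :
    maxSupportMass W P ≠ 0 := fun h => by
  simpa [h] using one_le_card_mul_maxSupportMass hW hP

lemma outputMoment_le_supportMass (hW : IsChannel W) {β : ℝ} (hβ : 0 < β) (P : X → ℝ≥0∞)
    (y : Y) : outputMoment W β P y ≤ supportMass W P y := by
  rw [outputMoment, supportMass, Finset.sum_filter]
  refine Finset.sum_le_sum fun x _ => ?_
  split_ifs with h
  · exact mul_le_of_le_one_right zero_le (ENNReal.rpow_le_one (IsChannel.le_one hW x y) hβ.le)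
  · simp [not_not.1 h, ENNReal.zero_rpow_of_pos hβ]

lemma renyiD_zero_joint (hW : IsChannel W) (P : X → ℝ≥0∞) (Q : Y → ℝ≥0∞) :
    renyiD 0 (joint P W) (fun p => margX (joint P W) p.1 * Q p.2)
      = -elog2 (∑ y, Q y * supportMass W P y) := by
  rw [renyiD, if_pos rfl, margX_joint hW, Finset.sum_filter, Fintype.sum_prod_type,
    Finset.sum_comm]
  congr 2
  refine Finset.sum_congr rfl fun y _ => ?_
  rw [supportMass, Finset.sum_filter, Finset.mul_sum]
  refine Finset.sum_congr rfl fun x _ => ?_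
  by_cases hx : P x = 0 <;> by_cases hy : W x y = 0 <;> simp [joint, hx, hy, mul_comm]

lemma renyiD_joint (hW : IsChannel W) {β : ℝ} (hβ0 : 0 < β) (hβ1 : β < 1) (P : X → ℝ≥0∞)
    (Q : Y → ℝ≥0∞) :
    renyiD (ENNReal.ofReal β) (joint P W) (fun p => margX (joint P W) p.1 * Q p.2)
      = (((β - 1)⁻¹ : ℝ) : EReal) * elog2 (∑ y, Q y ^ (1 - β) * outputMoment W β P y) := by
  have h0 : ENNReal.ofReal β ≠ 0 := by simpa using hβ0
  have h1 : ENNReal.ofReal β ≠ 1 := by rw [Ne, ENNReal.ofReal_eq_one]; linarith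
  rw [renyiD, if_neg h0, if_neg h1, if_neg ENNReal.ofReal_ne_top, ENNReal.toReal_ofReal hβ0.le,
    margX_joint hW, Fintype.sum_prod_type, Finset.sum_comm]
  congr 2
  refine Finset.sum_congr rfl fun y _ => ?_
  rw [outputMoment, Finset.mul_sum]
  refine Finset.sum_congr rfl fun x _ => ?_
  have hP : P x ^ β * P x ^ (1 - β) = P x := by
    rw [← ENNReal.rpow_add_of_nonneg _ _ hβ0.le (by linarith)]
    simp
  simp only [joint]
  rw [ENNReal.mul_rpow_of_nonneg _ _ hβ0.le,
    ENNReal.mul_rpow_of_nonneg _ _ (by linarith : 0 ≤ 1 - β)]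
  calc P x ^ β * W x y ^ β * (P x ^ (1 - β) * Q y ^ (1 - β))
      = (P x ^ β * P x ^ (1 - β)) * (Q y ^ (1 - β) * W x y ^ β) := by ring
    _ = Q y ^ (1 - β) * (P x * W x y ^ β) := by rw [hP]; ring

lemma exists_supportMass_eq_maxSupportMass [Nonempty Y] (P : X → ℝ≥0∞) :
    ∃ y, supportMass W P y = maxSupportMass W P := by
  obtain ⟨y, -, hy⟩ := Finset.exists_mem_eq_sup Finset.univ Finset.univ_nonempty (supportMass W P)
  exact ⟨y, hy.symm⟩

lemma isDist_pi_single [DecidableEq Y] (y : Y) : IsDist (Pi.single y 1 : Y → ℝ≥0∞) := by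
  simp [IsDist]

lemma renyiMI_zero_joint [Nonempty Y] (hW : IsChannel W) (P : X → ℝ≥0∞) :
    renyiMI 0 (joint P W) = -elog2 (maxSupportMass W P) := by
  obtain ⟨y₀, hy₀⟩ := exists_supportMass_eq_maxSupportMass (W := W) P
  refine le_antisymm ?_ (le_iInf fun Q => ?_)
  · refine iInf_le_of_le ⟨Pi.single y₀ 1, isDist_pi_single y₀⟩ ?_
    rw [renyiD_zero_joint hW]
    simp [Pi.single_apply, hy₀]
  · rw [renyiD_zero_joint hW, EReal.neg_le_neg_iff]
    refine elog2_mono ?_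
    calc ∑ y, Q.1 y * supportMass W P y ≤ ∑ y, Q.1 y * maxSupportMass W P :=
          Finset.sum_le_sum fun y _ => mul_le_mul_right (supportMass_le_maxSupportMass P y) _
      _ = maxSupportMass W P := by rw [← Finset.sum_mul, Q.2, one_mul]

lemma renyiMI_zero_joint_eq_coe [Nonempty Y] (hW : IsChannel W) {P : X → ℝ≥0∞} (hP : IsDist P) :
    renyiMI 0 (joint P W) = ((-Real.logb 2 (maxSupportMass W P).toReal : ℝ) : EReal) := by
  rw [renyiMI_zero_joint hW, elog2_of_ne_zero_of_ne_top (maxSupportMass_ne_zero hW hP)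
    (maxSupportMass_ne_top hP), EReal.coe_neg]

lemma neg_logb_maxSupportMass_le (hW : IsChannel W) {P : X → ℝ≥0∞} (hP : IsDist P) :
    -Real.logb 2 (maxSupportMass W P).toReal ≤ Real.logb 2 (Fintype.card Y) := by
  have hm0 := maxSupportMass_ne_zero hW hP
  have hmt := maxSupportMass_ne_top (W := W) hP
  have h := ENNReal.toReal_mono (ENNReal.mul_ne_top (by simp) hmt)
    (one_le_card_mul_maxSupportMass hW hP)
  rw [ENNReal.toReal_one, ENNReal.toReal_mul, ENNReal.toReal_natCast] at h
  have hpos := ENNReal.toReal_pos hm0 hmt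
  have hY : (0 : ℝ) < Fintype.card Y := pos_of_mul_pos_left (one_pos.trans_le h) hpos.le
  have := Real.logb_nonneg one_lt_two h
  rw [Real.logb_mul hY.ne' hpos.ne'] at this
  linarith

lemma renyiMI_joint_le [Nonempty Y] (hW : IsChannel W) {w : ℝ≥0∞}
    (hw : ∀ x y, W x y ≠ 0 → w ≤ W x y) {β : ℝ} (hβ0 : 0 < β) (hβ1 : β < 1) (P : X → ℝ≥0∞) :
    renyiMI (ENNReal.ofReal β) (joint P W)
      ≤ (((β - 1)⁻¹ : ℝ) : EReal) * elog2 (w ^ β * maxSupportMass W P) := by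
  obtain ⟨y₀, hy₀⟩ := exists_supportMass_eq_maxSupportMass (W := W) P
  refine iInf_le_of_le ⟨Pi.single y₀ 1, isDist_pi_single y₀⟩ ?_
  rw [renyiD_joint hW hβ0 hβ1, ← hy₀]
  refine antitone_coe_mul_elog2 (inv_nonpos.2 (by linarith)) ?_
  have hsum : ∑ y, (Pi.single y₀ 1 : Y → ℝ≥0∞) y ^ (1 - β) * outputMoment W β P y
      = outputMoment W β P y₀ := by
    simp [Pi.single_apply, ENNReal.zero_rpow_of_pos (by linarith : 0 < 1 - β)]
  exact hsum ▸ rpow_mul_supportMass_le_outputMoment hw hβ0 P y₀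

lemma le_renyiMI_joint (hW : IsChannel W) {β : ℝ} (hβ0 : 0 < β) (hβ1 : β < 1)
    (P : X → ℝ≥0∞) :
    (((β - 1)⁻¹ : ℝ) : EReal) * elog2 ((Fintype.card Y : ℝ≥0∞) ^ β * maxSupportMass W P)
      ≤ renyiMI (ENNReal.ofReal β) (joint P W) := by
  refine le_iInf fun Q => ?_
  rw [renyiD_joint hW hβ0 hβ1]
  refine antitone_coe_mul_elog2 (inv_nonpos.2 (by linarith)) ?_
  calc ∑ y, Q.1 y ^ (1 - β) * outputMoment W β P y
      ≤ ∑ y, Q.1 y ^ (1 - β) * maxSupportMass W P := by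
        gcongr with y
        exact (outputMoment_le_supportMass hW hβ0 P y).trans (supportMass_le_maxSupportMass P y)
    _ = (∑ y, Q.1 y ^ (1 - β)) * maxSupportMass W P := by rw [Finset.sum_mul]
    _ ≤ (Fintype.card Y : ℝ≥0∞) ^ β * maxSupportMass W P := by
      gcongr
      exact sum_rpow_one_sub_le_card_rpow Finset.univ Q.2 hβ0 hβ1

lemma renyiMI_joint_bounds [Nonempty Y] (hW : IsChannel W) {P : X → ℝ≥0∞} (hP : IsDist P)
    {w : ℝ≥0} (hw0 : 0 < w) (hw : ∀ x y, W x y ≠ 0 → (w : ℝ≥0∞) ≤ W x y) {β : ℝ}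
    (hβ0 : 0 < β) (hβ1 : β < 1) :
    (((-Real.logb 2 (maxSupportMass W P).toReal - β * Real.logb 2 (Fintype.card Y)) / (1 - β)
        : ℝ) : EReal) ≤ renyiMI (ENNReal.ofReal β) (joint P W) ∧
      renyiMI (ENNReal.ofReal β) (joint P W)
        ≤ (((-Real.logb 2 (maxSupportMass W P).toReal + β * -Real.logb 2 w) / (1 - β)
        : ℝ) : EReal) := by
  have hm0 := maxSupportMass_ne_zero hW hP
  have hmt := maxSupportMass_ne_top (W := W) hP
  have hβ : (β - 1)⁻¹ = -(1 - β)⁻¹ := by rw [← inv_neg, neg_sub]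
  constructor
  · convert le_renyiMI_joint hW hβ0 hβ1 P using 1
    rw [coe_mul_elog2_rpow_mul (by simp) (by simp) hm0 hmt, ENNReal.toReal_natCast, hβ]
    congr 1
    field_simp
    ring
  · convert renyiMI_joint_le hW hw hβ0 hβ1 P using 1
    rw [coe_mul_elog2_rpow_mul (by simpa using hw0.ne') (by simp) hm0 hmt, ENNReal.coe_toReal, hβ]
    congr 1
    field_simp
    ring

theorem exists_renyiCap_approx [Nonempty X] [Nonempty Y] (hW : IsChannel W) :
    ∃ c₀ L : ℝ, renyiCap 0 W = c₀ ∧ ∀ β ∈ Ioo (0 : ℝ) 1,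
      ∃ c : ℝ, renyiCap (ENNReal.ofReal β) W = c ∧ |(1 - β) * c - c₀| ≤ β * L := by
  obtain ⟨w, hw0, hw⟩ := exists_pos_le_of_ne_zero fun p : X × Y => W p.1 p.2
  let v : {P : X → ℝ≥0∞ // IsDist P} → ℝ := fun P => -Real.logb 2 (maxSupportMass W P.1).toReal
  have : Nonempty {P : X → ℝ≥0∞ // IsDist P} :=
    ⟨⟨Pi.single (Classical.arbitrary X) 1, isDist_pi_single _⟩⟩
  have hcap : renyiCap 0 W = ⨆ P, (v P : EReal) :=
    iSup_congr fun P => renyiMI_zero_joint_eq_coe hW P.2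
  obtain ⟨c₀, hc₀⟩ := exists_coe_eq_of_le_of_le (le_iSup (fun P => (v P : EReal))
    (Classical.arbitrary _)) (iSup_le fun P => EReal.coe_le_coe_iff.2
      (neg_logb_maxSupportMass_le hW P.2))
  refine ⟨c₀, max (Real.logb 2 (Fintype.card Y)) (-Real.logb 2 w), hcap.trans hc₀,
    fun β hβ => ?_⟩
  obtain ⟨c, hc, hlow, hup⟩ := exists_iSup_eq_coe_of_le_of_le hc₀ (sub_pos.2 hβ.2)
    (fun P => (renyiMI_joint_bounds hW P.2 hw0 (fun x y => hw (x, y)) hβ.1 hβ.2).1)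
    (fun P => (renyiMI_joint_bounds hW P.2 hw0 (fun x y => hw (x, y)) hβ.1 hβ.2).2)
  refine ⟨c, hc, abs_sub_le_iff.2 ⟨?_, ?_⟩⟩
  · linarith [mul_le_mul_of_nonneg_left (le_max_right (Real.logb 2 (Fintype.card Y))
      (-Real.logb 2 w)) hβ.1.le]
  · linarith [mul_le_mul_of_nonneg_left (le_max_left (Real.logb 2 (Fintype.card Y))
      (-Real.logb 2 w)) hβ.1.le]

end

def weightedExcessSup (C : ℝ → EReal) (r α : ℝ) : EReal :=
  ⨆ β : {β : ℝ // α ≤ β ∧ β ≤ 1},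
    (((α * (1 - β.1)) / (β.1 * (1 - α)) : ℝ) : EReal) * (C β.1 - (r : EReal))

lemma weight_mul_sub_le {α β c c₀ L r : ℝ} (hα : 0 < α) (hαβ : α ≤ β) (hβ : β < 1)
    (hc : (1 - β) * c ≤ c₀ + β * L) :
    α * (1 - β) / (β * (1 - α)) * (c - r) ≤ (max (c₀ - r) 0 + α * (L + |r|)) / (1 - α) := by
  have hβ0 : 0 < β := hα.trans_le hαβ
  have h1α : 0 < 1 - α := by linarith
  have hM : α / β * (c₀ - r) ≤ max (c₀ - r) 0 := by
    rcases le_total (c₀ - r) 0 with h | h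
    · exact (mul_nonpos_of_nonneg_of_nonpos (by positivity) h).trans (le_max_right _ _)
    · exact (mul_le_of_le_one_left h ((div_le_one hβ0).2 hαβ)).trans (le_max_left _ _)
  rw [le_div_iff₀ h1α]
  calc α * (1 - β) / (β * (1 - α)) * (c - r) * (1 - α)
      = α / β * ((1 - β) * c - (1 - β) * r) := by field_simp
    _ ≤ α / β * (c₀ + β * L - (1 - β) * r) := by gcongr
    _ = α / β * (c₀ - r) + α * (L + r) := by field_simp; ring
    _ ≤ max (c₀ - r) 0 + α * (L + |r|) := by gcongr; exact le_abs_self r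

section

variable {C : ℝ → EReal} {c₀ L r α : ℝ}

lemma weightedExcessSup_le (hC : ∀ β ∈ Ioo (0 : ℝ) 1,
      ∃ c : ℝ, C β = c ∧ |(1 - β) * c - c₀| ≤ β * L) (hα : α ∈ Ioo (0 : ℝ) 1) :
    weightedExcessSup C r α ≤ (((max (c₀ - r) 0 + α * (L + |r|)) / (1 - α) : ℝ) : EReal) := by
  obtain ⟨hα0, hα1⟩ := hα
  refine iSup_le fun ⟨β, hαβ, hβ1⟩ => ?_
  rcases hβ1.eq_or_lt with rfl | hβ1
  -- the weight vanishes at `β = 1`, and `0 * x = 0` for every `x : EReal`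
  · have hL : 0 ≤ L := by
      obtain ⟨c, -, h⟩ := hC (1 / 2) ⟨by norm_num, by norm_num⟩
      linarith [abs_nonneg ((1 - 1 / 2) * c - c₀)]
    have : 0 ≤ (max (c₀ - r) 0 + α * (L + |r|)) / (1 - α) := by
      have := le_max_right (c₀ - r) 0
      have : 0 < 1 - α := by linarith
      positivity
    simpa using this
  · obtain ⟨c, hc, hcL⟩ := hC β ⟨hα0.trans_le hαβ, hβ1⟩
    rw [hc, ← EReal.coe_sub, ← EReal.coe_mul, EReal.coe_le_coe_iff]
    exact weight_mul_sub_le hα0 hαβ hβ1 (by linarith [(abs_le.1 hcL).2])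

lemma le_weightedExcessSup (hC : ∀ β ∈ Ioo (0 : ℝ) 1,
      ∃ c : ℝ, C β = c ∧ |(1 - β) * c - c₀| ≤ β * L) (hα : α ∈ Ioo (0 : ℝ) 1) :
    ((max ((c₀ - α * L) / (1 - α) - r) 0 : ℝ) : EReal) ≤ weightedExcessSup C r α := by
  obtain ⟨c, hc, hcL⟩ := hC α hα
  have h1α : 0 < 1 - α := sub_pos.2 hα.2
  rw [EReal.coe_strictMono.monotone.map_max, EReal.coe_zero]
  refine max_le (le_iSup_of_le ⟨α, le_rfl, hα.2.le⟩ ?_) (le_iSup_of_le ⟨1, hα.2.le, le_rfl⟩ ?_)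
  · rw [div_self (mul_pos hα.1 h1α).ne', hc, EReal.coe_one, one_mul, ← EReal.coe_sub,
      EReal.coe_le_coe_iff, sub_le_sub_iff_right, div_le_iff₀ h1α]
    linarith [(abs_le.1 hcL).1]
  · simp

theorem tendsto_weightedExcessSup (hC : ∀ β ∈ Ioo (0 : ℝ) 1,
      ∃ c : ℝ, C β = c ∧ |(1 - β) * c - c₀| ≤ β * L) :
    Tendsto (weightedExcessSup C r) (𝓝[>] 0) (𝓝 (max ((c₀ : EReal) - r) 0)) := by
  have hlim : ∀ {f : ℝ → ℝ}, ContinuousAt f 0 → f 0 = max (c₀ - r) 0 →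
      Tendsto (fun α => (f α : EReal)) (𝓝[>] 0) (𝓝 (max ((c₀ : EReal) - r) 0)) := by
    intro f hf hf0
    rw [← EReal.coe_sub, ← EReal.coe_zero, ← EReal.coe_strictMono.monotone.map_max,
      EReal.tendsto_coe, ← hf0]
    exact hf.tendsto.mono_left nhdsWithin_le_nhds
  have hIoo : Ioo (0 : ℝ) 1 ∈ 𝓝[>] 0 := Ioo_mem_nhdsGT one_pos
  refine tendsto_of_tendsto_of_tendsto_of_le_of_le' (hlim (by fun_prop (disch := norm_num)) ?_)
    (hlim (by fun_prop (disch := norm_num)) ?_)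
    (eventually_of_mem hIoo fun _ => le_weightedExcessSup hC)
    (eventually_of_mem hIoo fun _ => weightedExcessSup_le hC)
  · simp
  · simp

end

theorem sc_exponent_limit_alpha_zero_general
    {X Y : Type*} [Fintype X] [Fintype Y] [Nonempty X] [Nonempty Y]
    (W : X → Y → ℝ≥0∞) (hW : IsChannel W) (r : ℝ) :
    Filter.Tendsto
      (fun α : ℝ =>
        ⨆ β : {β : ℝ // α ≤ β ∧ β ≤ 1},
          (((α * (1 - β.1)) / (β.1 * (1 - α)) : ℝ) : EReal) *
            (renyiCap (ENNReal.ofReal β.1) W - (r : EReal)))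
      (nhdsWithin 0 (Set.Ioi 0))
      (nhds (max (renyiCap 0 W - (r : EReal)) 0)) := by
  obtain ⟨c₀, L, hc₀, hC⟩ := exists_renyiCap_approx hW
  rw [hc₀]
  exact tendsto_weightedExcessSup (C := fun β => renyiCap (ENNReal.ofReal β) W) hC

/-- **Lemma 18.**  For any `r ≥ 0` and any discrete memoryless channel `W`,
`lim_{α → 0+} max_{α ≤ β ≤ 1} (α(1-β))/(β(1-α)) (I_β(W) - r) = |I_0(W) - r|⁺`. -/
theorem sc_exponent_limit_alpha_zero
    {X Y : Type*} [Fintype X] [Fintype Y] [Nonempty X] [Nonempty Y]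
    (W : X → Y → ℝ≥0∞) (hW : IsChannel W) (r : ℝ) (hr : 0 ≤ r) :
    Filter.Tendsto
      (fun α : ℝ =>
        ⨆ β : {β : ℝ // α ≤ β ∧ β ≤ 1},
          (((α * (1 - β.1)) / (β.1 * (1 - α)) : ℝ) : EReal) *
            (renyiCap (ENNReal.ofReal β.1) W - (r : EReal)))
      (nhdsWithin 0 (Set.Ioi 0))
      (nhds (max (renyiCap 0 W - (r : EReal)) 0)) :=
  sc_exponent_limit_alpha_zero_general W hW r

end RST
end
end

section
/- Let X, Y be finite sets, let W: X → Y be a channel, and let Ω denote the set of channels Ŵ absolutely continuous with respect to W, i.e. with supp(Ŵ(·|x)) ⊆ supp(W(·|x)) for all x. Define f(a, Q_X, Ŵ) := ∑_{x∈X} Q_X(x) · D_{1+a}( Ŵ(·|x) ‖ Ŵ(Q_X) ), where Ŵ(Q_X)(y) = ∑_x Q_X(x)Ŵ(y|x). If (a_k, Q_X^{(k)}, Ŵ_k) is a sequence in ℝ × P(X) × P(Y|X) with a_k ↓ 0 and (Q_X^{(k)}, Ŵ_k) → (Q_X^*, Ŵ^*), then lim_{k→∞} f(a_k, Q_X^{(k)},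 Ŵ_k) = f(0, Q_X^*, Ŵ^*). -/
open scoped ENNReal NNReal BigOperators Classical
open Filter

noncomputable section

namespace RST


section Aux
open Filter Real

lemma log_le_two_sqrt {u : ℝ} (hu : 0 < u) : Real.log u ≤ 2 * Real.sqrt u := by
  have h1 : Real.log (Real.sqrt u) ≤ Real.sqrt u - 1 :=
    Real.log_le_sub_one_of_pos (Real.sqrt_pos.2 hu)
  have h2 : Real.log u = 2 * Real.log (Real.sqrt u) := by rw [Real.log_sqrt hu.le]; ring
  nlinarith [Real.sqrt_nonneg u]

lemma neg_mul_log_le {x : ℝ} (hx : 0 < x) : -(x * Real.log x) ≤ 2 * Real.sqrt x := by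
  have h1 : Real.log x⁻¹ ≤ 2 * Real.sqrt x⁻¹ := log_le_two_sqrt (by positivity)
  rw [Real.log_inv] at h1
  have h3 : x * Real.sqrt x⁻¹ = Real.sqrt x := by
    rw [show x * Real.sqrt x⁻¹ = Real.sqrt (x^2) * Real.sqrt x⁻¹ by rw [Real.sqrt_sq hx.le],
      ← Real.sqrt_mul (by positivity)]
    congr 1; field_simp
  nlinarith [mul_le_mul_of_nonneg_left h1 hx.le]

lemma mul_log_ge {p q : ℝ} (hp : 0 < p) (hq : 0 < q) :
    -(2 * Real.sqrt (p * q)) ≤ p * Real.log (p / q) := by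
  have h1 : Real.log (q / p) ≤ 2 * Real.sqrt (q / p) := log_le_two_sqrt (by positivity)
  have h2 : Real.log (p / q) = - Real.log (q / p) := by
    rw [← Real.log_inv]; congr 1; field_simp
  have h3 : p * Real.sqrt (q / p) = Real.sqrt (p * q) := by
    rw [show p * Real.sqrt (q/p) = Real.sqrt (p^2) * Real.sqrt (q/p) by
      rw [Real.sqrt_sq hp.le], ← Real.sqrt_mul (by positivity)]
    congr 1; field_simp
  rw [h2]
  nlinarith [mul_le_mul_of_nonneg_left h1 hp.le]

section terms
variable {a p q : ℕ → ℝ} {p0 q0 δ : ℝ}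

lemma tendsto_psi (hδ : 0 < δ)
    (hp : Tendsto p atTop (nhds p0)) (hq : Tendsto q atTop (nhds q0))
    (hpnn : ∀ᶠ k in atTop, 0 ≤ p k) (hdom : ∀ᶠ k in atTop, δ * p k ≤ q k) :
    Tendsto (fun k => if p k = 0 then 0 else p k * Real.log (p k / q k)) atTop
      (nhds (if p0 = 0 then (0:ℝ) else p0 * Real.log (p0 / q0))) := by
  have hp0nn : 0 ≤ p0 := le_of_tendsto_of_tendsto tendsto_const_nhds hp hpnn
  have hq0 : δ * p0 ≤ q0 :=
    le_of_tendsto_of_tendsto (tendsto_const_nhds.mul hp) hq hdom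
  by_cases h0 : p0 = 0
  · rw [if_pos h0]
    apply tendsto_of_tendsto_of_tendsto_of_le_of_le'
      (g := fun k => -(2 * Real.sqrt (p k * q k)))
      (h := fun k => p k * Real.log δ⁻¹)
    · have : Tendsto (fun k => p k * q k) atTop (nhds 0) := by
        simpa [h0] using hp.mul hq
      have := ((Real.continuous_sqrt.tendsto 0).comp this).const_mul 2
      simpa using this.neg
    · simpa [h0] using hp.mul_const (Real.log δ⁻¹)
    · filter_upwards [hpnn, hdom] with k hknn hkd
      rcases eq_or_lt_of_le hknn with h | h
      · rw [if_pos h.symm]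
        have := Real.sqrt_nonneg (p k * q k); linarith
      · rw [if_neg (ne_of_gt h)]
        exact mul_log_ge h (lt_of_lt_of_le (by positivity) hkd)
    · filter_upwards [hpnn, hdom] with k hknn hkd
      rcases eq_or_lt_of_le hknn with h | h
      · rw [if_pos h.symm, ← h]; simp
      · rw [if_neg (ne_of_gt h)]
        have hqk : 0 < q k := lt_of_lt_of_le (by positivity) hkd
        have hr : p k / q k ≤ δ⁻¹ := by
          rw [div_le_iff₀ hqk, inv_mul_eq_div, le_div_iff₀ hδ]; linarith
        exact mul_le_mul_of_nonneg_left
          (Real.log_le_log (by positivity) hr) h.le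
  · rw [if_neg h0]
    have hp0 : 0 < p0 := lt_of_le_of_ne hp0nn (Ne.symm h0)
    have hq0' : 0 < q0 := lt_of_lt_of_le (by positivity) hq0
    have hev : ∀ᶠ k in atTop, p k ≠ 0 :=
      (hp.eventually (eventually_gt_nhds (by linarith : (0:ℝ) < p0))).mono
        fun k hk => ne_of_gt hk
    have hlim : Tendsto (fun k => p k * Real.log (p k / q k)) atTop
        (nhds (p0 * Real.log (p0 / q0))) :=
      hp.mul ((hp.div hq (ne_of_gt hq0')).log (by positivity))
    exact hlim.congr' (hev.mono fun k hk => (if_neg hk).symm)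
end terms

section terms2
variable {a p q : ℕ → ℝ} {p0 q0 δ : ℝ}

lemma tendsto_upper (hδ : 0 < δ)
    (ha0 : ∀ k, 0 < a k) (ha : Tendsto a atTop (nhds 0))
    (hp : Tendsto p atTop (nhds p0)) (hq : Tendsto q atTop (nhds q0))
    (hpnn : ∀ᶠ k in atTop, 0 ≤ p k) (hdom : ∀ᶠ k in atTop, δ * p k ≤ q k) :
    Tendsto (fun k => if p k = 0 then 0
        else p k * (p k / q k) ^ (a k) * Real.log (p k / q k)) atTop
      (nhds (if p0 = 0 then (0:ℝ) else p0 * Real.log (p0 / q0))) := by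
  have hp0nn : 0 ≤ p0 := le_of_tendsto_of_tendsto tendsto_const_nhds hp hpnn
  have hq0 : δ * p0 ≤ q0 :=
    le_of_tendsto_of_tendsto (tendsto_const_nhds.mul hp) hq hdom
  have ha1 : ∀ᶠ k in atTop, a k ≤ 1 := ha.eventually (eventually_le_nhds one_pos)
  by_cases h0 : p0 = 0
  · rw [if_pos h0]
    set B : ℝ := max 1 δ⁻¹ with hB
    have hB1 : (1:ℝ) ≤ B := le_max_left _ _
    have hBδ : δ⁻¹ ≤ B := le_max_right _ _
    apply squeeze_zero_norm' (a := fun k => B * (2 * Real.sqrt (p k * q k) + p k * |Real.log δ⁻¹|))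
    · filter_upwards [hpnn, hdom, ha1] with k hknn hkd hka
      rcases eq_or_lt_of_le hknn with h | h
      · rw [if_pos h.symm]
        simp only [norm_zero]
        have h1 := Real.sqrt_nonneg (p k * q k)
        have h2 : 0 ≤ p k * |Real.log δ⁻¹| := by rw [← h]; simp
        nlinarith
      · rw [if_neg (ne_of_gt h)]
        have hqk : 0 < q k := lt_of_lt_of_le (by positivity) hkd
        have hr0 : 0 < p k / q k := by positivity
        have hr : p k / q k ≤ δ⁻¹ := by
          rw [div_le_iff₀ hqk, inv_mul_eq_div, le_div_iff₀ hδ]; linarith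
        have hra : (p k / q k) ^ (a k) ≤ B := by
          rcases le_or_gt (p k / q k) 1 with hc | hc
          · exact le_trans (Real.rpow_le_one hr0.le hc (ha0 k).le) hB1
          · calc (p k / q k) ^ (a k) ≤ (p k / q k) ^ (1:ℝ) :=
                  Real.rpow_le_rpow_of_exponent_le hc.le hka
              _ = p k / q k := Real.rpow_one _
              _ ≤ B := le_trans hr hBδ
        have hra0 : 0 ≤ (p k / q k) ^ (a k) := Real.rpow_nonneg hr0.le _
        have hlb : -(2 * Real.sqrt (p k * q k)) ≤ p k * Real.log (p k / q k) :=
          mul_log_ge h hqk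
        have hub : p k * Real.log (p k / q k) ≤ p k * |Real.log δ⁻¹| :=
          le_trans (mul_le_mul_of_nonneg_left (Real.log_le_log (by positivity) hr) h.le)
            (mul_le_mul_of_nonneg_left (le_abs_self _) h.le)
        have habs : |p k * Real.log (p k / q k)| ≤
            2 * Real.sqrt (p k * q k) + p k * |Real.log δ⁻¹| := by
          rw [abs_le]
          constructor
          · have : 0 ≤ p k * |Real.log δ⁻¹| := by positivity
            linarith
          · have := Real.sqrt_nonneg (p k * q k); linarith
        rw [show p k * (p k / q k) ^ a k * Real.log (p k / q k)
            = (p k / q k) ^ a k * (p k * Real.log (p k / q k)) by ring]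
        rw [Real.norm_eq_abs, abs_mul, abs_of_nonneg hra0]
        exact mul_le_mul hra habs (abs_nonneg _) (by linarith)
    · have h1 : Tendsto (fun k => p k * q k) atTop (nhds 0) := by
        simpa [h0] using hp.mul hq
      have h2 : Tendsto (fun k => 2 * Real.sqrt (p k * q k) + p k * |Real.log δ⁻¹|)
          atTop (nhds 0) := by
        have := ((Real.continuous_sqrt.tendsto 0).comp h1).const_mul 2
        have h3 := (hp.mul_const |Real.log δ⁻¹|)
        rw [h0, zero_mul] at h3
        simpa using this.add h3
      simpa using h2.const_mul B
  · rw [if_neg h0]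
    have hp0 : 0 < p0 := lt_of_le_of_ne hp0nn (Ne.symm h0)
    have hq0' : 0 < q0 := lt_of_lt_of_le (by positivity) hq0
    have hevp : ∀ᶠ k in atTop, 0 < p k :=
      hp.eventually (eventually_gt_nhds (by linarith : (0:ℝ) < p0))
    have hevq : ∀ᶠ k in atTop, 0 < q k :=
      hq.eventually (eventually_gt_nhds hq0')
    have hr : Tendsto (fun k => p k / q k) atTop (nhds (p0 / q0)) :=
      hp.div hq (ne_of_gt hq0')
    have hlogr : Tendsto (fun k => Real.log (p k / q k)) atTop
        (nhds (Real.log (p0 / q0))) := hr.log (by positivity)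
    have hpow : Tendsto (fun k => (p k / q k) ^ (a k)) atTop (nhds 1) := by
      have h1 : Tendsto (fun k => Real.log (p k / q k) * a k) atTop (nhds 0) := by
        simpa using hlogr.mul ha
      have h2 := (Real.continuous_exp.tendsto 0).comp h1
      rw [Real.exp_zero] at h2
      apply h2.congr'
      filter_upwards [hevp, hevq] with k hkp hkq
      exact (Real.rpow_def_of_pos (by positivity) _).symm
    have hlim : Tendsto (fun k => p k * (p k / q k) ^ (a k) * Real.log (p k / q k))
        atTop (nhds (p0 * Real.log (p0 / q0))) := by
      have := (hp.mul hpow).mul hlogr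
      simpa using this
    exact hlim.congr' (hevp.mono fun k hk => (if_neg (ne_of_gt hk)).symm)
end terms2

lemma exp_sub_one_le' (u : ℝ) : Real.exp u - 1 ≤ u * Real.exp u := by
  have h := Real.add_one_le_exp (-u)
  have h2 : Real.exp (-u) * Real.exp u = 1 := by rw [← Real.exp_add]; simp
  nlinarith [Real.exp_pos u]

section terms3
variable {a p q : ℕ → ℝ} {p0 q0 δ : ℝ}

lemma tendsto_term (hδ : 0 < δ)
    (ha0 : ∀ k, 0 < a k) (ha : Tendsto a atTop (nhds 0))
    (hp : Tendsto p atTop (nhds p0)) (hq : Tendsto q atTop (nhds q0))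
    (hpnn : ∀ᶠ k in atTop, 0 ≤ p k) (hdom : ∀ᶠ k in atTop, δ * p k ≤ q k) :
    Tendsto (fun k => if p k = 0 then 0
        else p k * ((p k / q k) ^ (a k) - 1) / a k) atTop
      (nhds (if p0 = 0 then (0:ℝ) else p0 * Real.log (p0 / q0))) := by
  apply tendsto_of_tendsto_of_tendsto_of_le_of_le'
    (tendsto_psi hδ hp hq hpnn hdom)
    (tendsto_upper hδ ha0 ha hp hq hpnn hdom)
  · filter_upwards [hpnn, hdom] with k hknn hkd
    rcases eq_or_lt_of_le hknn with h | h
    · rw [if_pos h.symm, if_pos h.symm]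
    · rw [if_neg (ne_of_gt h), if_neg (ne_of_gt h)]
      have hqk : 0 < q k := lt_of_lt_of_le (by positivity) hkd
      have hr0 : 0 < p k / q k := by positivity
      have hrw : (p k / q k) ^ (a k) = Real.exp (Real.log (p k / q k) * a k) :=
        Real.rpow_def_of_pos hr0 _
      have hb1 : Real.log (p k / q k) * a k ≤ (p k / q k) ^ (a k) - 1 := by
        rw [hrw]; linarith [Real.add_one_le_exp (Real.log (p k / q k) * a k)]
      rw [le_div_iff₀ (ha0 k)]
      nlinarith [hb1, h.le, ha0 k]
  · filter_upwards [hpnn, hdom] with k hknn hkd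
    rcases eq_or_lt_of_le hknn with h | h
    · rw [if_pos h.symm, if_pos h.symm]
    · rw [if_neg (ne_of_gt h), if_neg (ne_of_gt h)]
      have hqk : 0 < q k := lt_of_lt_of_le (by positivity) hkd
      have hr0 : 0 < p k / q k := by positivity
      have hrw : (p k / q k) ^ (a k) = Real.exp (Real.log (p k / q k) * a k) :=
        Real.rpow_def_of_pos hr0 _
      have hb2 : (p k / q k) ^ (a k) - 1 ≤
          Real.log (p k / q k) * a k * (p k / q k) ^ (a k) := by
        rw [hrw]; linarith [exp_sub_one_le' (Real.log (p k / q k) * a k)]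
      rw [div_le_iff₀ (ha0 k)]
      nlinarith [hb2, h.le, ha0 k]
end terms3

lemma abs_log_near_one' {S : ℝ} (hS : 1/2 ≤ S) : |Real.log S - (S - 1)| ≤ 2 * (S - 1)^2 := by
  have hS0 : 0 < S := by linarith
  have h1 : Real.log S ≤ S - 1 := Real.log_le_sub_one_of_pos hS0
  have h2 : Real.log S⁻¹ ≤ S⁻¹ - 1 := Real.log_le_sub_one_of_pos (by positivity)
  rw [Real.log_inv] at h2
  rw [abs_sub_comm, abs_of_nonneg (by linarith)]
  have h3 : S - 2 + S⁻¹ = (S-1)^2 / S := by field_simp; ring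
  have h4 : (S-1)^2 / S ≤ 2 * (S-1)^2 := by
    rw [div_le_iff₀ hS0]; nlinarith [sq_nonneg (S-1)]
  have h5 : -Real.log S ≤ S⁻¹ - 1 := by linarith
  linarith

lemma coreA {Y : Type*} [Fintype Y] (a : ℕ → ℝ) (p q : ℕ → Y → ℝ) (p0 q0 : Y → ℝ)
    (δ : ℝ) (hδ : 0 < δ)
    (ha0 : ∀ k, 0 < a k) (ha : Tendsto a atTop (nhds 0))
    (hp : ∀ y, Tendsto (fun k => p k y) atTop (nhds (p0 y)))
    (hq : ∀ y, Tendsto (fun k => q k y) atTop (nhds (q0 y)))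
    (hpnn : ∀ᶠ k in atTop, ∀ y, 0 ≤ p k y)
    (hdom : ∀ᶠ k in atTop, ∀ y, δ * p k y ≤ q k y)
    (hsum : ∀ᶠ k in atTop, ∑ y, p k y = 1) :
    Tendsto (fun k => (a k)⁻¹ *
        Real.log (∑ y, if p k y = 0 then 0 else p k y * (p k y / q k y) ^ (a k)))
      atTop (nhds (∑ y, if p0 y = 0 then 0 else p0 y * Real.log (p0 y / q0 y))) := by
  set L : ℝ := ∑ y, if p0 y = 0 then 0 else p0 y * Real.log (p0 y / q0 y) with hL
  set G : ℕ → ℝ := fun k =>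
    ∑ y, if p k y = 0 then 0 else p k y * ((p k y / q k y) ^ (a k) - 1) / a k with hGdef
  set S : ℕ → ℝ := fun k =>
    ∑ y, if p k y = 0 then 0 else p k y * (p k y / q k y) ^ (a k) with hSdef
  have hG : Tendsto G atTop (nhds L) := by
    apply tendsto_finset_sum
    intro y _
    exact tendsto_term hδ ha0 ha (hp y) (hq y)
      (hpnn.mono fun k hk => hk y) (hdom.mono fun k hk => hk y)
  have hSeq : ∀ᶠ k in atTop, S k = 1 + a k * G k := by
    filter_upwards [hsum] with k hks
    have : S k - ∑ y, p k y = a k * G k := by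
      rw [hGdef, hSdef]
      simp only [Finset.mul_sum, ← Finset.sum_sub_distrib]
      apply Finset.sum_congr rfl
      intro y _
      by_cases h : p k y = 0
      · rw [if_pos h, if_pos h, h]; ring
      · rw [if_neg h, if_neg h,
          mul_comm (a k) _, div_mul_cancel₀ _ (ne_of_gt (ha0 k))]
        ring
    rw [hks] at this; linarith
  have hS1 : Tendsto S atTop (nhds 1) := by
    have h1 : Tendsto (fun k => 1 + a k * G k) atTop (nhds 1) := by
      have := ha.mul hG
      simpa using (tendsto_const_nhds (x := (1:ℝ))).add this
    exact h1.congr' (hSeq.mono fun k hk => hk.symm)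
  have hShalf : ∀ᶠ k in atTop, 1/2 ≤ S k :=
    hS1.eventually (eventually_ge_nhds (by norm_num : (1:ℝ)/2 < 1))
  set E : ℕ → ℝ := fun k => (a k)⁻¹ * Real.log (S k) - G k with hEdef
  have hE : Tendsto E atTop (nhds 0) := by
    apply squeeze_zero_norm' (a := fun k => 2 * a k * (G k)^2)
    · filter_upwards [hSeq, hShalf] with k hk1 hk2
      have hak := ha0 k
      have hEeq : E k = (a k)⁻¹ * (Real.log (S k) - (S k - 1)) := by
        rw [hEdef]
        have : S k - 1 = a k * G k := by linarith
        rw [this]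
        field_simp
      rw [Real.norm_eq_abs, hEeq, abs_mul, abs_inv, abs_of_pos hak]
      have hb := abs_log_near_one' hk2
      have h2 : (S k - 1)^2 = (a k)^2 * (G k)^2 := by
        have : S k - 1 = a k * G k := by linarith
        rw [this]; ring
      rw [h2] at hb
      calc (a k)⁻¹ * |Real.log (S k) - (S k - 1)|
          ≤ (a k)⁻¹ * (2 * ((a k)^2 * (G k)^2)) := by
            apply mul_le_mul_of_nonneg_left hb (by positivity)
        _ = 2 * a k * (G k)^2 := by field_simp
    · have := (ha.mul (hG.mul hG)).const_mul 2
      simpa [mul_assoc, pow_two] using this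
  have : Tendsto (fun k => G k + E k) atTop (nhds (L + 0)) := hG.add hE
  rw [add_zero] at this
  apply this.congr
  intro k
  rw [hEdef]; ring

lemma sqrt_mul_le_half {p q : ℝ} (hp : 0 ≤ p) (hq : 0 ≤ q) :
    Real.sqrt (p * q) ≤ (p + q) / 2 := by
  rw [Real.sqrt_mul hp]
  nlinarith [sq_nonneg (Real.sqrt p - Real.sqrt q), Real.sq_sqrt hp, Real.sq_sqrt hq,
    Real.sqrt_nonneg p, Real.sqrt_nonneg q]

lemma coreB {Y : Type*} [Fintype Y] {a : ℝ} (ha : 0 < a) (ha4 : a ≤ 1/4)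
    (p q : Y → ℝ) {c : ℝ} (hc : 0 < c) (hc1 : c ≤ 1)
    (hpnn : ∀ y, 0 ≤ p y) (hqnn : ∀ y, 0 ≤ q y)
    (hdom : ∀ y, c * p y ≤ q y)
    (hsum : ∑ y, p y = 1) (hqsum : ∑ y, q y ≤ 1) :
    |a⁻¹ * Real.log (∑ y, if p y = 0 then 0 else p y * (p y / q y) ^ a)| ≤
      4 + -Real.log c := by
  set S : ℝ := ∑ y, if p y = 0 then 0 else p y * (p y / q y) ^ a with hS
  have hlogc : 0 ≤ -Real.log c := by
    have := Real.log_nonpos hc.le hc1; linarith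
  -- upper bound S ≤ c⁻¹ ^ a
  have hup : S ≤ c⁻¹ ^ a := by
    calc S ≤ ∑ y, p y * c⁻¹ ^ a := by
          apply Finset.sum_le_sum
          intro y _
          by_cases h : p y = 0
          · rw [if_pos h, h]; positivity
          · rw [if_neg h]
            have hpy : 0 < p y := lt_of_le_of_ne (hpnn y) (Ne.symm h)
            have hqy : 0 < q y := lt_of_lt_of_le (by positivity) (hdom y)
            have hr : p y / q y ≤ c⁻¹ := by
              rw [div_le_iff₀ hqy, inv_mul_eq_div, le_div_iff₀ hc]; linarith [hdom y]
            exact mul_le_mul_of_nonneg_left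
              (Real.rpow_le_rpow (by positivity) hr ha.le) hpy.le
      _ = c⁻¹ ^ a := by rw [← Finset.sum_mul, hsum, one_mul]
  -- lower bound S ≥ 1 - 2a
  have hlow : 1 - 2 * a ≤ S := by
    have h1 : ∀ y, p y + a * (if p y = 0 then 0 else p y * Real.log (p y / q y)) ≤
        (if p y = 0 then 0 else p y * (p y / q y) ^ a) := by
      intro y
      by_cases h : p y = 0
      · rw [if_pos h, if_pos h, h]; simp
      · rw [if_neg h, if_neg h]
        have hpy : 0 < p y := lt_of_le_of_ne (hpnn y) (Ne.symm h)
        have hqy : 0 < q y := lt_of_lt_of_le (by positivity) (hdom y)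
        have hr0 : 0 < p y / q y := by positivity
        have := Real.add_one_le_exp (Real.log (p y / q y) * a)
        rw [← Real.rpow_def_of_pos hr0] at this
        nlinarith [hpy.le]
    have h2 : ∀ y, -(p y + q y) ≤
        (if p y = 0 then 0 else p y * Real.log (p y / q y)) := by
      intro y
      by_cases h : p y = 0
      · rw [if_pos h, h]; simp [hqnn y]
      · rw [if_neg h]
        have hpy : 0 < p y := lt_of_le_of_ne (hpnn y) (Ne.symm h)
        have hqy : 0 < q y := lt_of_lt_of_le (by positivity) (hdom y)
        have := mul_log_ge hpy hqy
        have h3 := sqrt_mul_le_half (hpnn y) (hqnn y)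
        linarith
    have h4 : ∑ y, (p y + a * (if p y = 0 then 0 else p y * Real.log (p y / q y))) ≤ S :=
      Finset.sum_le_sum fun y _ => h1 y
    rw [Finset.sum_add_distrib, hsum, ← Finset.mul_sum] at h4
    have h5 : -(2:ℝ) ≤ ∑ y, (if p y = 0 then 0 else p y * Real.log (p y / q y)) := by
      calc -(2:ℝ) ≤ -(∑ y, p y) - ∑ y, q y := by rw [hsum]; linarith
        _ = ∑ y, -(p y + q y) := by
              rw [Finset.sum_neg_distrib, Finset.sum_add_distrib]; ring
        _ ≤ _ := Finset.sum_le_sum fun y _ => h2 y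
    nlinarith
  have hShalf : 1/2 ≤ S := by linarith
  have hS0 : 0 < S := by linarith
  -- upper: a⁻¹ log S ≤ -log c
  have hu2 : a⁻¹ * Real.log S ≤ -Real.log c := by
    have h1 : Real.log S ≤ Real.log (c⁻¹ ^ a) := Real.log_le_log hS0 hup
    rw [Real.log_rpow (by positivity), Real.log_inv] at h1
    rw [inv_mul_le_iff₀ ha]
    nlinarith
  -- lower: -4 ≤ a⁻¹ log S
  have hl2 : -4 ≤ a⁻¹ * Real.log S := by
    have h2 : Real.log S⁻¹ ≤ S⁻¹ - 1 := Real.log_le_sub_one_of_pos (by positivity)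
    rw [Real.log_inv] at h2
    have h3 : -(4*a) ≤ 1 - S⁻¹ := by
      rw [show (1:ℝ) - S⁻¹ = (S - 1)/S by field_simp]
      rw [le_div_iff₀ hS0]
      nlinarith
    have h4 : -(4*a) ≤ Real.log S := by linarith
    rw [le_inv_mul_iff₀ ha]
    nlinarith
  rw [abs_le]
  constructor <;> [linarith; linarith]

lemma erealCoeSum {ι : Type*} (s : Finset ι) (f : ι → ℝ) :
    ((∑ i ∈ s, f i : ℝ) : EReal) = ∑ i ∈ s, ((f i : ℝ) : EReal) :=
  map_sum (⟨⟨Real.toEReal, EReal.coe_zero⟩, EReal.coe_add⟩ : ℝ →+ EReal) f s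

lemma dist_le_one' {Z : Type*} [Fintype Z] {P : Z → ℝ≥0∞} (h : ∑ z, P z = 1) (z : Z) :
    P z ≤ 1 := by
  rw [← h]; exact Finset.single_le_sum (fun _ _ => zero_le) (Finset.mem_univ z)

lemma dist_ne_top' {Z : Type*} [Fintype Z] {P : Z → ℝ≥0∞} (h : ∑ z, P z = 1) (z : Z) :
    P z ≠ ⊤ :=
  ne_top_of_le_ne_top ENNReal.one_ne_top (dist_le_one' h z)

lemma dist_toReal_sum' {Z : Type*} [Fintype Z] {P : Z → ℝ≥0∞} (h : ∑ z, P z = 1) :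
    ∑ z, (P z).toReal = 1 := by
  rw [← ENNReal.toReal_sum (fun z _ => dist_ne_top' h z), h, ENNReal.toReal_one]

lemma out_isDist' {X Y : Type*} [Fintype X] [Fintype Y] {Q : X → ℝ≥0∞} {W : X → Y → ℝ≥0∞}
    (hQ : ∑ x, Q x = 1) (hW : ∀ x, ∑ y, W x y = 1) :
    ∑ y, ∑ x', Q x' * W x' y = 1 := by
  rw [Finset.sum_comm]
  calc ∑ x', ∑ y, Q x' * W x' y = ∑ x', Q x' * ∑ y, W x' y := by
        simp_rw [Finset.mul_sum]
    _ = 1 := by simp_rw [hW]; simpa using hQ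

end Aux

/-- **Lemma 23 (continuity).**  Let
`f(a, Q_X, Ŵ) := ∑_x Q_X(x) D_{1+a}(Ŵ(·|x) ‖ Ŵ(Q_X))`.
If `a_k ↓ 0` and `(Q_X^{(k)}, Ŵ_k) → (Q_X^*, Ŵ^*)` entrywise, then
`lim_k f(a_k, Q_X^{(k)}, Ŵ_k) = f(0, Q_X^*, Ŵ^*)`. -/
theorem continuity_of_conditional_divergence
    {X Y : Type*} [Fintype X] [Fintype Y]
    (a : ℕ → ℝ) (ha_pos : ∀ k, 0 < a k) (ha_anti : Antitone a)
    (ha_lim : Filter.Tendsto a Filter.atTop (nhds 0))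
    (Qs : ℕ → X → ℝ≥0∞) (hQs : ∀ k, IsDist (Qs k))
    (Ws : ℕ → X → Y → ℝ≥0∞) (hWs : ∀ k, IsChannel (Ws k))
    (Qstar : X → ℝ≥0∞) (hQstar : IsDist Qstar)
    (Wstar : X → Y → ℝ≥0∞) (hWstar : IsChannel Wstar)
    (hQconv : ∀ x, Filter.Tendsto (fun k => Qs k x) Filter.atTop (nhds (Qstar x)))
    (hWconv : ∀ x y, Filter.Tendsto (fun k => Ws k x y) Filter.atTop (nhds (Wstar x y))) :
    Filter.Tendsto
      (fun k => ∑ x, (((Qs k x).toReal : ℝ) : EReal) *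
        renyiD (ENNReal.ofReal (1 + a k)) (Ws k x) (fun y => ∑ x', Qs k x' * Ws k x' y))
      Filter.atTop
      (nhds (∑ x, (((Qstar x).toReal : ℝ) : EReal) *
        renyiD 1 (Wstar x) (fun y => ∑ x', Qstar x' * Wstar x' y))) := by
  classical
  have hQtop : ∀ k x, Qs k x ≠ ⊤ := fun k x => dist_ne_top' (hQs k) x
  have hWtop : ∀ k x y, Ws k x y ≠ ⊤ := fun k x y => dist_ne_top' (hWs k x) y
  have hQstop : ∀ x, Qstar x ≠ ⊤ := fun x => dist_ne_top' hQstar x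
  have hWstop : ∀ x y, Wstar x y ≠ ⊤ := fun x y => dist_ne_top' (hWstar x) y
  have hout1 : ∀ k, ∑ y, ∑ x', Qs k x' * Ws k x' y = 1 :=
    fun k => out_isDist' (hQs k) (hWs k)
  have houts1 : ∑ y, ∑ x', Qstar x' * Wstar x' y = 1 := out_isDist' hQstar hWstar
  have houttop : ∀ k y, (∑ x', Qs k x' * Ws k x' y) ≠ ⊤ :=
    fun k y => dist_ne_top' (hout1 k) y
  have houtstop : ∀ y, (∑ x', Qstar x' * Wstar x' y) ≠ ⊤ :=
    fun y => dist_ne_top' houts1 y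
  -- real versions and their convergence
  have hor_eq : ∀ k y, (∑ x', Qs k x' * Ws k x' y).toReal
      = ∑ x', (Qs k x').toReal * (Ws k x' y).toReal := by
    intro k y
    rw [ENNReal.toReal_sum (fun x' _ => ENNReal.mul_ne_top (hQtop k x') (hWtop k x' y))]
    simp [ENNReal.toReal_mul]
  have hors_eq : ∀ y, (∑ x', Qstar x' * Wstar x' y).toReal
      = ∑ x', (Qstar x').toReal * (Wstar x' y).toReal := by
    intro y
    rw [ENNReal.toReal_sum (fun x' _ => ENNReal.mul_ne_top (hQstop x') (hWstop x' y))]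
    simp [ENNReal.toReal_mul]
  have hqr : ∀ x, Filter.Tendsto (fun k => (Qs k x).toReal) Filter.atTop
      (nhds (Qstar x).toReal) :=
    fun x => (ENNReal.tendsto_toReal (hQstop x)).comp (hQconv x)
  have hwr : ∀ x y, Filter.Tendsto (fun k => (Ws k x y).toReal) Filter.atTop
      (nhds (Wstar x y).toReal) :=
    fun x y => (ENNReal.tendsto_toReal (hWstop x y)).comp (hWconv x y)
  have hor : ∀ y, Filter.Tendsto (fun k => (∑ x', Qs k x' * Ws k x' y).toReal)
      Filter.atTop (nhds (∑ x', Qstar x' * Wstar x' y).toReal) := by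
    intro y
    rw [hors_eq y]
    apply Filter.Tendsto.congr (fun k => (hor_eq k y).symm)
    exact tendsto_finset_sum _ (fun x' _ => (hqr x').mul (hwr x' y))
  have hor_ge : ∀ k x y, (Qs k x).toReal * (Ws k x y).toReal
      ≤ (∑ x', Qs k x' * Ws k x' y).toReal := by
    intro k x y
    rw [hor_eq k y]
    exact Finset.single_le_sum (f := fun x' => (Qs k x').toReal * (Ws k x' y).toReal)
      (fun i _ => by positivity) (Finset.mem_univ x)
  -- real-valued summands
  set SR : ℕ → X → ℝ := fun k x => ∑ y, if (Ws k x y).toReal = 0 then 0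
    else (Ws k x y).toReal * ((Ws k x y).toReal / (∑ x', Qs k x' * Ws k x' y).toReal) ^ (a k)
    with hSR
  set F : ℕ → X → ℝ := fun k x => if Qs k x = 0 then 0
    else (Qs k x).toReal * ((a k)⁻¹ * Real.logb 2 (SR k x)) with hF
  set G : X → ℝ := fun x => if Qstar x = 0 then 0
    else (Qstar x).toReal * ∑ y, (if (Wstar x y).toReal = 0 then 0
      else (Wstar x y).toReal *
        Real.logb 2 ((Wstar x y).toReal / (∑ x', Qstar x' * Wstar x' y).toReal)) with hG
  have CL1 : ∀ k x, (((Qs k x).toReal : ℝ) : EReal) *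
      renyiD (ENNReal.ofReal (1 + a k)) (Ws k x) (fun y => ∑ x', Qs k x' * Ws k x' y)
      = ((F k x : ℝ) : EReal) := by
    intro k x
    by_cases hx : Qs k x = 0
    · simp only [hF, if_pos hx, hx, ENNReal.toReal_zero, EReal.coe_zero, zero_mul]
    · have hak := ha_pos k
      set α := ENNReal.ofReal (1 + a k) with hα
      have hα0 : α ≠ 0 := (ENNReal.ofReal_pos.2 (by linarith)).ne'
      have hα1 : α ≠ 1 := by
        have : (1:ℝ≥0∞) < α := by
          rw [hα, ← ENNReal.ofReal_one]
          exact (ENNReal.ofReal_lt_ofReal_iff (by linarith)).2 (by linarith)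
        exact this.ne'
      have hαtop : α ≠ ⊤ := ENNReal.ofReal_ne_top
      have hαre : α.toReal = 1 + a k := ENNReal.toReal_ofReal (by linarith)
      rw [renyiD, if_neg hα0, if_neg hα1, if_neg hαtop, hαre]
      have hexp : (1 : ℝ) - (1 + a k) = -(a k) := by ring
      rw [hexp]
      -- facts about the sum T
      have himp : ∀ y, (∑ x', Qs k x' * Ws k x' y) = 0 → Ws k x y = 0 := by
        intro y h
        have h1 : Qs k x * Ws k x y ≤ ∑ x', Qs k x' * Ws k x' y :=
          Finset.single_le_sum (f := fun x' => Qs k x' * Ws k x' y)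
            (fun i _ => zero_le) (Finset.mem_univ x)
        rw [h, le_zero_iff, mul_eq_zero] at h1
        tauto
      have hterm_ne_top : ∀ y ∈ Finset.univ,
          Ws k x y ^ (1 + a k) * (∑ x', Qs k x' * Ws k x' y) ^ (-(a k)) ≠ ⊤ := by
        intro y _
        by_cases hw : Ws k x y = 0
        · rw [hw, ENNReal.zero_rpow_of_pos (by linarith), zero_mul]
          exact ENNReal.zero_ne_top
        · have hone : (∑ x', Qs k x' * Ws k x' y) ≠ 0 := fun h => hw (himp y h)
          apply ENNReal.mul_ne_top
          · rw [Ne, ENNReal.rpow_eq_top_iff]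
            push_neg
            exact ⟨fun h => absurd h hw, fun h => absurd h (hWtop k x y)⟩
          · rw [Ne, ENNReal.rpow_eq_top_iff]
            push_neg
            exact ⟨fun h => absurd h hone, fun h => absurd h (houttop k y)⟩
      have hTtop : (∑ y, Ws k x y ^ (1 + a k) * (∑ x', Qs k x' * Ws k x' y) ^ (-(a k))) ≠ ⊤ := by
        rw [← lt_top_iff_ne_top, ENNReal.sum_lt_top]
        exact fun y hy => lt_top_iff_ne_top.2 (hterm_ne_top y hy)
      have hT0 : (∑ y, Ws k x y ^ (1 + a k) * (∑ x', Qs k x' * Ws k x' y) ^ (-(a k))) ≠ 0 := by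
        obtain ⟨y0, hy0⟩ : ∃ y, Ws k x y ≠ 0 := by
          by_contra h
          push_neg at h
          have := hWs k x
          rw [Finset.sum_eq_zero (fun y _ => h y)] at this
          exact zero_ne_one this
        intro h
        rw [Finset.sum_eq_zero_iff] at h
        have := h y0 (Finset.mem_univ y0)
        rw [mul_eq_zero] at this
        rcases this with h1 | h1
        · rw [ENNReal.rpow_eq_zero_iff] at h1
          rcases h1 with ⟨h2, _⟩ | ⟨_, h3⟩
          · exact hy0 h2
          · linarith
        · rw [ENNReal.rpow_eq_zero_iff] at h1
          rcases h1 with ⟨h2, h3⟩ | ⟨h2, _⟩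
          · linarith
          · exact houttop k y0 h2
      rw [elog2, if_neg hT0, if_neg hTtop]
      rw [← EReal.coe_mul, ← EReal.coe_mul]
      congr 1
      have hTre : (∑ y, Ws k x y ^ (1 + a k) * (∑ x', Qs k x' * Ws k x' y) ^ (-(a k))).toReal
          = SR k x := by
        rw [ENNReal.toReal_sum hterm_ne_top, hSR]
        apply Finset.sum_congr rfl
        intro y _
        by_cases hw : Ws k x y = 0
        · rw [hw, ENNReal.zero_rpow_of_pos (by linarith), zero_mul]
          simp
        · have hone : (∑ x', Qs k x' * Ws k x' y) ≠ 0 := fun h => hw (himp y h)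
          have hwre : (Ws k x y).toReal ≠ 0 := by
            rw [Ne, ENNReal.toReal_eq_zero_iff]
            push_neg
            exact ⟨hw, hWtop k x y⟩
          rw [if_neg hwre, ENNReal.toReal_mul, ← ENNReal.toReal_rpow, ← ENNReal.toReal_rpow]
          have hw0 : 0 < (Ws k x y).toReal := lt_of_le_of_ne ENNReal.toReal_nonneg (Ne.symm hwre)
          have ho0 : 0 < (∑ x', Qs k x' * Ws k x' y).toReal :=
            ENNReal.toReal_pos hone (houttop k y)
          rw [Real.rpow_add hw0, Real.rpow_one, Real.div_rpow hw0.le ho0.le,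
            Real.rpow_neg ho0.le, div_eq_mul_inv]
          ring
      rw [hTre]
      simp only [hF, if_neg hx, show (1 : ℝ) + a k - 1 = a k by ring]

  have CL2 : ∀ x, (((Qstar x).toReal : ℝ) : EReal) *
      renyiD 1 (Wstar x) (fun y => ∑ x', Qstar x' * Wstar x' y)
      = ((G x : ℝ) : EReal) := by
    intro x
    by_cases hx : Qstar x = 0
    · simp only [hG, if_pos hx, hx, ENNReal.toReal_zero, EReal.coe_zero, zero_mul]
    · rw [renyiD, if_neg one_ne_zero, if_pos rfl]
      have hterm : ∀ y, ((Wstar x y).toReal : EReal) *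
          elog2 (Wstar x y / (∑ x', Qstar x' * Wstar x' y))
          = (((if (Wstar x y).toReal = 0 then 0
              else (Wstar x y).toReal *
                Real.logb 2 ((Wstar x y).toReal / (∑ x', Qstar x' * Wstar x' y).toReal)) : ℝ)
             : EReal) := by
        intro y
        by_cases hw : Wstar x y = 0
        · rw [if_pos (by rw [hw]; simp)]
          rw [hw, ENNReal.toReal_zero, EReal.coe_zero, zero_mul]
        · have hwre : (Wstar x y).toReal ≠ 0 := by
            rw [Ne, ENNReal.toReal_eq_zero_iff]
            push_neg
            exact ⟨hw, hWstop x y⟩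
          rw [if_neg hwre]
          have ho0 : (∑ x', Qstar x' * Wstar x' y) ≠ 0 := by
            intro h
            have h1 : Qstar x * Wstar x y ≤ ∑ x', Qstar x' * Wstar x' y :=
              Finset.single_le_sum (f := fun x' => Qstar x' * Wstar x' y)
                (fun i _ => zero_le) (Finset.mem_univ x)
            rw [h, le_zero_iff, mul_eq_zero] at h1
            tauto
          have hr0 : Wstar x y / (∑ x', Qstar x' * Wstar x' y) ≠ 0 := by
            rw [Ne, ENNReal.div_eq_zero_iff]
            push_neg
            exact ⟨hw, houtstop y⟩
          have hrtop : Wstar x y / (∑ x', Qstar x' * Wstar x' y) ≠ ⊤ := by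
            rw [Ne, ENNReal.div_eq_top]
            push_neg
            exact ⟨fun _ => ho0, fun h => absurd h (hWstop x y)⟩
          rw [elog2, if_neg hr0, if_neg hrtop, ← EReal.coe_mul, ENNReal.toReal_div]
      calc (((Qstar x).toReal : ℝ) : EReal) *
            ∑ y, ((Wstar x y).toReal : EReal) *
              elog2 (Wstar x y / (∑ x', Qstar x' * Wstar x' y))
          = (((Qstar x).toReal : ℝ) : EReal) *
            ((∑ y, (if (Wstar x y).toReal = 0 then 0
              else (Wstar x y).toReal *
                Real.logb 2 ((Wstar x y).toReal / (∑ x', Qstar x' * Wstar x' y).toReal)) : ℝ)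
             : EReal) := by
            rw [erealCoeSum]
            congr 1
            exact Finset.sum_congr rfl fun y _ => hterm y
        _ = ((G x : ℝ) : EReal) := by
            rw [← EReal.coe_mul]
            congr 1
            simp only [hG, if_neg hx]

  have CL3 : ∀ x, Filter.Tendsto (fun k => F k x) Filter.atTop (nhds (G x)) := by
    intro x
    by_cases hx : Qstar x = 0
    · -- vanishing weight: squeeze to 0
      have hGx : G x = 0 := by simp only [hG, if_pos hx]
      rw [hGx]
      have hqr0 : Filter.Tendsto (fun k => (Qs k x).toReal) Filter.atTop (nhds 0) := by
        have := hqr x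
        rwa [hx, ENNReal.toReal_zero] at this
      have hlog2 : (0:ℝ) < Real.log 2 := Real.log_pos one_lt_two
      apply squeeze_zero_norm'
        (a := fun k => (4 * (Qs k x).toReal + 2 * Real.sqrt ((Qs k x).toReal)) * (Real.log 2)⁻¹)
      · have ha14 : ∀ᶠ k in Filter.atTop, a k ≤ 1/4 :=
          ha_lim.eventually (eventually_le_nhds (by norm_num))
        filter_upwards [ha14] with k hk
        by_cases hkx : Qs k x = 0
        · simp only [hF, if_pos hkx, norm_zero, hkx, ENNReal.toReal_zero]
          positivity
        · have hc : 0 < (Qs k x).toReal := ENNReal.toReal_pos hkx (hQtop k x)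
          have hc1 : (Qs k x).toReal ≤ 1 := by
            have := ENNReal.toReal_mono ENNReal.one_ne_top (dist_le_one' (hQs k) x)
            simpa using this
          have hcb := coreB (ha_pos k) hk (fun y => (Ws k x y).toReal)
            (fun y => (∑ x', Qs k x' * Ws k x' y).toReal) hc hc1
            (fun y => ENNReal.toReal_nonneg) (fun y => ENNReal.toReal_nonneg)
            (fun y => hor_ge k x y) (dist_toReal_sum' (hWs k x))
            (le_of_eq (dist_toReal_sum' (hout1 k)))
          have hFx : F k x = (Qs k x).toReal * ((a k)⁻¹ * Real.logb 2 (SR k x)) := by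
            simp only [hF, if_neg hkx]
          have habs : |(a k)⁻¹ * Real.logb 2 (SR k x)| =
              |(a k)⁻¹ * Real.log (SR k x)| * (Real.log 2)⁻¹ := by
            rw [Real.logb, show (a k)⁻¹ * (Real.log (SR k x) / Real.log 2)
              = ((a k)⁻¹ * Real.log (SR k x)) * (Real.log 2)⁻¹ by ring,
              abs_mul, abs_of_pos (by positivity : (0:ℝ) < (Real.log 2)⁻¹)]
          have hSReq : SR k x = ∑ y, if (Ws k x y).toReal = 0 then 0
              else (Ws k x y).toReal *
                ((Ws k x y).toReal / (∑ x', Qs k x' * Ws k x' y).toReal) ^ (a k) := by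
            simp only [hSR]
          rw [← hSReq] at hcb
          have hml := neg_mul_log_le hc
          rw [hFx, Real.norm_eq_abs, abs_mul, abs_of_nonneg hc.le, habs]
          rw [show (Qs k x).toReal * (|(a k)⁻¹ * Real.log (SR k x)| * (Real.log 2)⁻¹)
            = ((Qs k x).toReal * |(a k)⁻¹ * Real.log (SR k x)|) * (Real.log 2)⁻¹ by ring]
          apply mul_le_mul_of_nonneg_right _ (by positivity)
          calc (Qs k x).toReal * |(a k)⁻¹ * Real.log (SR k x)|
              ≤ (Qs k x).toReal * (4 + -Real.log ((Qs k x).toReal)) :=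
                mul_le_mul_of_nonneg_left hcb hc.le
            _ ≤ 4 * (Qs k x).toReal + 2 * Real.sqrt ((Qs k x).toReal) := by nlinarith
      · have h1 : Filter.Tendsto
            (fun k => 4 * (Qs k x).toReal + 2 * Real.sqrt ((Qs k x).toReal))
            Filter.atTop (nhds 0) := by
          have h2 := (hqr0.const_mul 4).add
            (((Real.continuous_sqrt.tendsto 0).comp hqr0).const_mul 2)
          simpa using h2
        simpa using h1.mul_const (Real.log 2)⁻¹
    · -- positive weight: use coreA
      have hq0 : 0 < (Qstar x).toReal := ENNReal.toReal_pos hx (hQstop x)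
      set δ : ℝ := (Qstar x).toReal / 2 with hδdef
      have hδ : 0 < δ := by positivity
      have hev : ∀ᶠ k in Filter.atTop, δ ≤ (Qs k x).toReal :=
        (hqr x).eventually (eventually_ge_nhds (by rw [hδdef]; linarith))
      have hdom' : ∀ᶠ k in Filter.atTop, ∀ y,
          δ * (Ws k x y).toReal ≤ (∑ x', Qs k x' * Ws k x' y).toReal := by
        filter_upwards [hev] with k hk y
        calc δ * (Ws k x y).toReal ≤ (Qs k x).toReal * (Ws k x y).toReal :=
              mul_le_mul_of_nonneg_right hk ENNReal.toReal_nonneg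
          _ ≤ _ := hor_ge k x y
      have hcore : Filter.Tendsto (fun k => (a k)⁻¹ * Real.log (SR k x)) Filter.atTop
          (nhds (∑ y, if (Wstar x y).toReal = 0 then 0
            else (Wstar x y).toReal *
              Real.log ((Wstar x y).toReal / (∑ x', Qstar x' * Wstar x' y).toReal))) := by
        have := coreA a (fun k y => (Ws k x y).toReal)
          (fun k y => (∑ x', Qs k x' * Ws k x' y).toReal)
          (fun y => (Wstar x y).toReal)
          (fun y => (∑ x', Qstar x' * Wstar x' y).toReal) δ hδ ha_pos ha_lim
          (fun y => hwr x y) (fun y => hor y)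
          (Filter.Eventually.of_forall (fun k y => ENNReal.toReal_nonneg)) hdom'
          (Filter.Eventually.of_forall (fun k => dist_toReal_sum' (hWs k x)))
        simpa only [hSR] using this
      have hevne : ∀ᶠ k in Filter.atTop, Qs k x ≠ 0 := by
        filter_upwards [hev] with k hk h0
        rw [h0, ENNReal.toReal_zero] at hk
        linarith
      have hlog2 : Real.log 2 ≠ 0 := ne_of_gt (Real.log_pos one_lt_two)
      have hGx : G x = (Qstar x).toReal *
          ((∑ y, if (Wstar x y).toReal = 0 then 0
            else (Wstar x y).toReal *
              Real.log ((Wstar x y).toReal / (∑ x', Qstar x' * Wstar x' y).toReal))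
            / Real.log 2) := by
        simp only [hG, if_neg hx]
        congr 1
        rw [Finset.sum_div]
        apply Finset.sum_congr rfl
        intro y _
        split
        · simp
        · rw [Real.logb]; ring
      rw [hGx]
      have hlim := (hqr x).mul (hcore.div_const (Real.log 2))
      apply hlim.congr'
      filter_upwards [hevne] with k hk
      simp only [hF, if_neg hk, Real.logb]
      ring

  have h1 : ∀ k, ∑ x, (((Qs k x).toReal : ℝ) : EReal) *
      renyiD (ENNReal.ofReal (1 + a k)) (Ws k x) (fun y => ∑ x', Qs k x' * Ws k x' y)
      = ((∑ x, F k x : ℝ) : EReal) := by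
    intro k
    rw [erealCoeSum]
    exact Finset.sum_congr rfl fun x _ => CL1 k x
  have h2 : ∑ x, (((Qstar x).toReal : ℝ) : EReal) *
      renyiD 1 (Wstar x) (fun y => ∑ x', Qstar x' * Wstar x' y)
      = ((∑ x, G x : ℝ) : EReal) := by
    rw [erealCoeSum]
    exact Finset.sum_congr rfl fun x _ => CL2 x
  simp only [h1, h2]
  exact EReal.tendsto_coe.2 (tendsto_finset_sum _ (fun x _ => CL3 x))


end RST
end
end
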